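/- arXiv:1603.02105 — 2 statements merged into one kernel-verified Lean document; each statement's English description precedes it below -/
import Mathlib

section
/- Let B be a unital C*-algebra, regarded as a Banach space, with canonical isometric embedding ι : B → B** into its double dual. For a, c ∈ B let M_{a,c} : B → B be the bounded linear map x ↦ a x + x c, and let M_{a,c}** : B** → B** denote its double transpose. Fix m ≥ 1, n ≥ 0, elements a_j, c_j, b_j ∈ B for 1 ≤ j ≤ m, elements a′_k, c′_k ∈ B and reals r_k ≥ 0 for 1 ≤ k ≤ n. Define γ(x) = max_{1≤j≤m} ‖a_j x + x c_j − b_j‖ + max_{1≤k≤n} max(r_k − ‖a′_k x + x c′_k‖, 0) for x ∈ B, and define γ**(X) = max_{1≤j≤m} ‖M_{a_j,c_j}**(X) − ι(b_j)‖ + max_{1≤k≤n} max(r_k − ‖M_{a′_k,c′_k}**(X)‖, 0) for X ∈ B**. Then the infimum of γ over the closed unit ball of B equals 0 if and only if the infimum of γ** over the closed unit ball of B** equals 0. -/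
/-!
Embedding `B` into `B**` gives one direction. For the other, the key fact is a quantitative
local reflexivity: if `‖X‖ ≤ 1` and `‖T_i** X - ι b_i‖ < s_i` for finitely many bounded maps
`T_i`, then some `x` in the open unit ball satisfies `‖T_i x - b_i‖ < s_i` for all `i`.
Otherwise a functional `L = ∑ L_i ∘ pr_i` separates the box `∏ ball (b_i) (s_i)` from the convex
set `(T_i)_i '' ball 0 1`; testing `X` against `∑ L_i ∘ T_i` gives
`∑ s_i ‖L_i‖ ≤ ∑ ‖T_i** X - ι b_i‖ ‖L_i‖`, so `L = 0`, which is absurd.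
This controls the terms `‖a_j x + x c_j - b_j‖`. For the lower bounds hidden in
`r_k - ‖a'_k x + x c'_k‖`, pick almost-norming functionals `φ_k` of `M_k** X` and also require
`φ_k (M_k x) ≈ X (φ_k ∘ M_k)`; these are constraints of the same kind, since
`(φ_k ∘ M_k)** X = ι (X (φ_k ∘ M_k))`.
-/

open NormedSpace

/-- The transpose (Banach-space adjoint) of a bounded linear map, `f ↦ f ∘ T`. -/
noncomputable def clmTranspose {E F : Type*}
    [NormedAddCommGroup E] [NormedSpace ℂ E] [NormedAddCommGroup F] [NormedSpace ℂ F]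
    (T : E →L[ℂ] F) : StrongDual ℂ F →L[ℂ] StrongDual ℂ E :=
  (ContinuousLinearMap.compL ℂ E F ℂ).flip T

/-- The double transpose `T** : E** → F**` of a bounded linear map `T : E → F`. -/
noncomputable def clmDoubleTranspose {E F : Type*}
    [NormedAddCommGroup E] [NormedSpace ℂ E] [NormedAddCommGroup F] [NormedSpace ℂ F]
    (T : E →L[ℂ] F) : StrongDual ℂ (StrongDual ℂ E) →L[ℂ] StrongDual ℂ (StrongDual ℂ F) :=
  clmTranspose (clmTranspose T)

/-- For `a, c` in a unital C*-algebra `B`, the bounded linear map `x ↦ a * x + x * c`. -/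
noncomputable def mulLinMap {B : Type*} [CStarAlgebra B] (a c : B) : B →L[ℂ] B :=
  ContinuousLinearMap.mul ℂ B a + (ContinuousLinearMap.mul ℂ B).flip c

open Metric

section DoubleTranspose

variable {E F G : Type*} [NormedAddCommGroup E] [NormedSpace ℂ E]
  [NormedAddCommGroup F] [NormedSpace ℂ F] [NormedAddCommGroup G] [NormedSpace ℂ G]

lemma norm_clmDoubleTranspose_apply_le (T : E →L[ℂ] F) (X : StrongDual ℂ (StrongDual ℂ E)) :
    ‖clmDoubleTranspose T X‖ ≤ ‖T‖ * ‖X‖ :=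
  ContinuousLinearMap.opNorm_le_bound _ (by positivity) fun f =>
    calc ‖X (f.comp T)‖ ≤ ‖X‖ * ‖f.comp T‖ := X.le_opNorm _
      _ ≤ ‖X‖ * (‖f‖ * ‖T‖) := by gcongr; exact f.opNorm_comp_le T
      _ = ‖T‖ * ‖X‖ * ‖f‖ := by ring

lemma clmDoubleTranspose_comp_apply (S : F →L[ℂ] G) (T : E →L[ℂ] F)
    (X : StrongDual ℂ (StrongDual ℂ E)) :
    clmDoubleTranspose (S.comp T) X = clmDoubleTranspose S (clmDoubleTranspose T X) :=
  rfl

lemma clmDoubleTranspose_inclusionInDoubleDual (T : E →L[ℂ] F) (x : E) :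
    clmDoubleTranspose T (inclusionInDoubleDual ℂ E x) = inclusionInDoubleDual ℂ F (T x) :=
  rfl

lemma norm_inclusionInDoubleDual_apply (x : E) : ‖inclusionInDoubleDual ℂ E x‖ = ‖x‖ :=
  (inclusionInDoubleDualLi ℂ).norm_map x

lemma norm_inclusionInDoubleDual_sub (x y : E) :
    ‖inclusionInDoubleDual ℂ E x - inclusionInDoubleDual ℂ E y‖ = ‖x - y‖ := by
  have h : inclusionInDoubleDual ℂ E x - inclusionInDoubleDual ℂ E y =
      inclusionInDoubleDual ℂ E (x - y) := by
    ext f; simp [dual_def]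
  rw [h, norm_inclusionInDoubleDual_apply]

lemma clmDoubleTranspose_apply_of_dual (g : StrongDual ℂ E) (X : StrongDual ℂ (StrongDual ℂ E)) :
    clmDoubleTranspose g X = inclusionInDoubleDual ℂ ℂ (X g) := by
  ext φ
  have hφ : ∀ z, z • φ 1 = φ z := fun z => by rw [← map_smul, smul_eq_mul, mul_one]
  have hcomp : φ.comp g = φ 1 • g := by
    ext x
    rw [ContinuousLinearMap.comp_apply, FunLike.coe_smul, Pi.smul_apply, smul_eq_mul, mul_comm,
      ← smul_eq_mul, hφ]
  show X (φ.comp g) = φ (X g)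
  rw [hcomp, map_smul, smul_eq_mul, mul_comm, ← smul_eq_mul, hφ]

lemma norm_clmDoubleTranspose_comp_sub_le {S : F →L[ℂ] G} (hS : ‖S‖ ≤ 1) (T : E →L[ℂ] F)
    (b : F) (X : StrongDual ℂ (StrongDual ℂ E)) :
    ‖clmDoubleTranspose (S.comp T) X - inclusionInDoubleDual ℂ G (S b)‖ ≤
      ‖clmDoubleTranspose T X - inclusionInDoubleDual ℂ F b‖ := by
  have h : clmDoubleTranspose S (clmDoubleTranspose T X - inclusionInDoubleDual ℂ F b) =
      clmDoubleTranspose S (clmDoubleTranspose T X) -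
        clmDoubleTranspose S (inclusionInDoubleDual ℂ F b) := by
    ext; rfl
  rw [clmDoubleTranspose_comp_apply, ← clmDoubleTranspose_inclusionInDoubleDual, ← h]
  exact (norm_clmDoubleTranspose_apply_le S _).trans
    (mul_le_of_le_one_left (ContinuousLinearMap.opNorm_nonneg _) hS)

end DoubleTranspose

namespace StrongDual

variable {E : Type*} [NormedAddCommGroup E] [NormedSpace ℂ E]

lemma exists_norm_lt_one_lt_re (f : StrongDual ℂ E) {r : ℝ} (hr : r < ‖f‖) :
    ∃ x, ‖x‖ < 1 ∧ r < (f x).re := by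
  obtain ⟨x, hx, hrx⟩ := f.exists_lt_apply_of_lt_opNorm hr
  set w := Complex.exp (-(f x).arg * Complex.I)
  have hw : ‖w‖ = 1 := by simpa [w] using Complex.norm_exp_ofReal_mul_I (-(f x).arg)
  have hwf : w * f x = ‖f x‖ := by
    conv_lhs => rw [← Complex.norm_mul_exp_arg_mul_I (f x)]
    rw [mul_left_comm, ← Complex.exp_add]
    simp
  refine ⟨w • x, by rwa [norm_smul, hw, one_mul], ?_⟩
  rwa [map_smul, smul_eq_mul, hwf, Complex.ofReal_re]

lemma norm_le_of_forall_re_le {f : StrongDual ℂ E} {β : ℝ}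
    (h : ∀ x, ‖x‖ < 1 → (f x).re ≤ β) : ‖f‖ ≤ β := by
  by_contra! hβ
  obtain ⟨x, hx, hβx⟩ := exists_norm_lt_one_lt_re f hβ
  exact (h x hx).not_gt hβx

end StrongDual

section Separation

variable {E : Type*} [NormedAddCommGroup E] [NormedSpace ℂ E]
  {ι : Type*} [Fintype ι] {F : ι → Type*} [∀ i, NormedAddCommGroup (F i)]
  [∀ i, NormedSpace ℂ (F i)]

lemma sum_mul_norm_comp_single_le [DecidableEq ι] (L : StrongDual ℂ (∀ i, F i)) {ρ : ι → ℝ}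
    (hρ : ∀ i, 0 < ρ i) {u : ℝ} (h : ∀ p : ∀ i, F i, (∀ i, ‖p i‖ < ρ i) → (L p).re ≤ u) :
    ∑ i, ρ i * ‖L.comp (ContinuousLinearMap.single ℂ F i)‖ ≤ u := by
  refine le_of_forall_pos_le_add fun η hη => ?_
  have hρsum : 0 ≤ ∑ i, ρ i := Finset.sum_nonneg fun i _ => (hρ i).le
  set η' := η / (∑ i, ρ i + 1)
  have hη' : 0 < η' := by positivity
  choose v hv hvL using fun i =>
    StrongDual.exists_norm_lt_one_lt_re (L.comp (ContinuousLinearMap.single ℂ F i))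
      (sub_lt_self _ hη')
  have hp := h (fun i => (ρ i : ℂ) • v i) fun i => by
    rw [norm_smul, Complex.norm_real, Real.norm_of_nonneg (hρ i).le]
    exact mul_lt_of_lt_one_right (hρ i) (hv i)
  rw [← L.sum_comp_single, Complex.re_sum] at hp
  simp only [map_smul, smul_eq_mul, Complex.re_ofReal_mul] at hp
  have hslack : η' * ∑ i, ρ i ≤ η := by
    rw [div_mul_eq_mul_div, div_le_iff₀ (by positivity)]
    nlinarith
  calc ∑ i, ρ i * ‖L.comp (ContinuousLinearMap.single ℂ F i)‖
      = ∑ i, ρ i * (‖L.comp (ContinuousLinearMap.single ℂ F i)‖ - η') + η' * ∑ i, ρ i := by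
        simp only [mul_sub, Finset.sum_sub_distrib, Finset.sum_mul, mul_comm η']
        ring
    _ ≤ ∑ i, ρ i * (L.comp (ContinuousLinearMap.single ℂ F i) (v i)).re + η := by
        gcongr with i
        · exact (hρ i).le
        · exact (hvL i).le
    _ ≤ u + η := by gcongr

lemma eq_zero_of_sum_mul_norm_comp_single_le [DecidableEq ι] (L : StrongDual ℂ (∀ i, F i))
    {s τ : ι → ℝ} (hτs : ∀ i, τ i < s i)
    (h : ∑ i, s i * ‖L.comp (ContinuousLinearMap.single ℂ F i)‖ ≤
      ∑ i, τ i * ‖L.comp (ContinuousLinearMap.single ℂ F i)‖) :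
    L = 0 := by
  have hnonneg : ∀ i ∈ Finset.univ,
      0 ≤ (s i - τ i) * ‖L.comp (ContinuousLinearMap.single ℂ F i)‖ :=
    fun i _ => mul_nonneg (sub_nonneg.2 (hτs i).le) (norm_nonneg _)
  have hsum : ∑ i, (s i - τ i) * ‖L.comp (ContinuousLinearMap.single ℂ F i)‖ = 0 := by
    refine le_antisymm ?_ (Finset.sum_nonneg hnonneg)
    simpa only [sub_mul, Finset.sum_sub_distrib, sub_nonpos] using h
  have hcomp : ∀ i, L.comp (ContinuousLinearMap.single ℂ F i) = 0 := fun i =>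
    norm_eq_zero.1 <| ((mul_eq_zero.1 ((Finset.sum_eq_zero_iff_of_nonneg hnonneg).1 hsum i
      (Finset.mem_univ i))).resolve_left (sub_pos.2 (hτs i)).ne')
  ext p
  simp [← L.sum_comp_single, hcomp]

lemma re_apply_comp_pi_le [DecidableEq ι] (L : StrongDual ℂ (∀ i, F i)) (T : ∀ i, E →L[ℂ] F i)
    (b : ∀ i, F i) (X : StrongDual ℂ (StrongDual ℂ E)) :
    (X (L.comp (ContinuousLinearMap.pi T))).re ≤
      ∑ i, ‖clmDoubleTranspose (T i) X - inclusionInDoubleDual ℂ (F i) (b i)‖ *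
        ‖L.comp (ContinuousLinearMap.single ℂ F i)‖ + (L b).re := by
  set h := fun i => L.comp (ContinuousLinearMap.single ℂ F i)
  have hLT : L.comp (ContinuousLinearMap.pi T) = ∑ i, (h i).comp (T i) := by
    ext x
    rw [ContinuousLinearMap.comp_apply, ← L.sum_comp_single, sum_apply]
    rfl
  have hsplit : X (L.comp (ContinuousLinearMap.pi T)) =
      ∑ i, (clmDoubleTranspose (T i) X - inclusionInDoubleDual ℂ (F i) (b i)) (h i) + L b := by
    rw [hLT, map_sum, ← ContinuousLinearMap.sum_comp_single ℂ F L b]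
    simp only [sub_apply, Finset.sum_sub_distrib, dual_def]
    exact (sub_add_cancel _ _).symm
  rw [hsplit, Complex.add_re, Complex.re_sum]
  gcongr with i
  exact (Complex.re_le_norm _).trans (ContinuousLinearMap.le_opNorm _ _)

theorem exists_forall_norm_sub_lt_of_clmDoubleTranspose (T : ∀ i, E →L[ℂ] F i) (b : ∀ i, F i)
    {s : ι → ℝ} {X : StrongDual ℂ (StrongDual ℂ E)} (hX : ‖X‖ ≤ 1)
    (hs : ∀ i, ‖clmDoubleTranspose (T i) X - inclusionInDoubleDual ℂ (F i) (b i)‖ < s i) :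
    ∃ x : E, ‖x‖ < 1 ∧ ∀ i, ‖T i x - b i‖ < s i := by
  classical
  by_contra! hfar
  have hs₀ : ∀ i, 0 < s i := fun i => (ContinuousLinearMap.opNorm_nonneg _).trans_lt (hs i)
  set T' := ContinuousLinearMap.pi T
  have hdisj : Disjoint (Set.univ.pi fun i => ball (b i) (s i)) (T' '' ball 0 1) := by
    rw [Set.disjoint_left]
    rintro p hp ⟨x, hx, rfl⟩
    obtain ⟨i, hi⟩ := hfar x (mem_ball_zero_iff.1 hx)
    exact hi.not_gt (by simpa [T', dist_eq_norm, norm_sub_rev] using hp i trivial)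
  obtain ⟨L, u, hLU, hLC⟩ := RCLike.geometric_hahn_banach_open (𝕜 := ℂ)
    (convex_pi fun i _ => convex_ball (b i) (s i))
    (isOpen_set_pi Set.finite_univ fun i _ => isOpen_ball)
    ((convex_ball 0 1).linear_image (T'.toLinearMap.restrictScalars ℝ)) hdisj
  simp only [RCLike.re_to_complex] at hLU hLC
  have hbox := sum_mul_norm_comp_single_le L hs₀ (u := u - (L b).re) fun p hp => by
    have := hLU (b + p) fun i _ => by simpa [dist_eq_norm] using hp i
    rw [map_add, Complex.add_re] at this
    linarith
  have hG : ‖L.comp T'‖ ≤ -u := StrongDual.norm_le_of_forall_re_le fun x hx => by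
    have := hLC _ ⟨-x, by simpa using hx, rfl⟩
    simp only [map_neg] at this
    simpa using neg_le_neg this
  have hXG : u ≤ (X (L.comp T')).re := by
    have hXG' := (abs_le.1 ((Complex.abs_re_le_norm _).trans (X.le_opNorm (L.comp T')))).1
    have := mul_le_of_le_one_left (ContinuousLinearMap.opNorm_nonneg (L.comp T')) hX
    linarith
  have hL : L = 0 := eq_zero_of_sum_mul_norm_comp_single_le L hs <| by
    linarith [re_apply_comp_pi_le L T b X]
  have hLb := hLU b fun i _ => mem_ball_self (hs₀ i)
  have hL0 := hLC 0 ⟨0, mem_ball_self one_pos, map_zero _⟩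
  simp only [hL, zero_apply, Complex.zero_re] at hLb hL0
  linarith

end Separation

section Dual

variable {E : Type*} [NormedAddCommGroup E] [NormedSpace ℂ E]
  {ι κ : Type*} [Fintype ι] [Fintype κ] {F : Type*} [NormedAddCommGroup F] [NormedSpace ℂ F]

theorem exists_forall_norm_sub_lt_of_clmDoubleTranspose_of_dual (T : ι → E →L[ℂ] F) (b : ι → F)
    (g : κ → StrongDual ℂ E) {s : ι → ℝ} {δ : ℝ} (hδ : 0 < δ)
    {X : StrongDual ℂ (StrongDual ℂ E)} (hX : ‖X‖ ≤ 1)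
    (hs : ∀ i, ‖clmDoubleTranspose (T i) X - inclusionInDoubleDual ℂ F (b i)‖ < s i) :
    ∃ x : E, ‖x‖ < 1 ∧ (∀ i, ‖T i x - b i‖ < s i) ∧ ∀ k, ‖g k x - X (g k)‖ < δ := by
  obtain ⟨x, hx, hxs⟩ := exists_forall_norm_sub_lt_of_clmDoubleTranspose
    (F := fun _ : ι ⊕ κ => F × ℂ)
    (Sum.elim (fun i => (ContinuousLinearMap.inl ℂ F ℂ).comp (T i))
      fun k => (ContinuousLinearMap.inr ℂ F ℂ).comp (g k))
    (Sum.elim (fun i => (b i, 0)) fun k => (0, X (g k))) (s := Sum.elim s fun _ => δ) hX <| by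
    rintro (i | k)
    · exact (norm_clmDoubleTranspose_comp_sub_le (ContinuousLinearMap.norm_inl_le_one ℂ F ℂ)
        (T i) (b i) X).trans_lt (hs i)
    · refine (norm_clmDoubleTranspose_comp_sub_le (ContinuousLinearMap.norm_inr_le_one ℂ F ℂ)
        (g k) (X (g k)) X).trans_lt ?_
      rwa [clmDoubleTranspose_apply_of_dual, sub_self, ContinuousLinearMap.opNorm_zero]
  exact ⟨x, hx, fun i => by simpa using hxs (.inl i), fun k => by simpa using hxs (.inr k)⟩

end Dual

lemma sInf_image_eq_zero_iff {α : Type*} {f : α → ℝ} {s : Set α} (hs : s.Nonempty)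
    (hf : ∀ x ∈ s, 0 ≤ f x) : sInf (f '' s) = 0 ↔ ∀ ε > 0, ∃ x ∈ s, f x < ε := by
  have hbdd : BddBelow (f '' s) := ⟨0, by rintro _ ⟨x, hx, rfl⟩; exact hf x hx⟩
  constructor
  · intro h ε hε
    obtain ⟨_, ⟨x, hx, rfl⟩, hxε⟩ := exists_lt_of_csInf_lt (hs.image f) (h ▸ hε)
    exact ⟨x, hx, hxε⟩
  · intro h
    refine le_antisymm (le_of_forall_pos_le_add fun ε hε => ?_)
      (le_csInf (hs.image f) (by rintro _ ⟨x, hx, rfl⟩; exact hf x hx))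
    obtain ⟨x, hx, hxε⟩ := h ε hε
    linarith [csInf_le hbdd ⟨x, hx, rfl⟩]

lemma iSup_le_iSup_add_of_forall_le_add {ι : Type*} [Finite ι] {u v : ι → ℝ} {δ : ℝ}
    (hv : ∀ i, 0 ≤ v i) (hδ : 0 ≤ δ) (h : ∀ i, u i ≤ v i + δ) : ⨆ i, u i ≤ (⨆ i, v i) + δ :=
  Real.iSup_le (fun i => (h i).trans (by gcongr; exact le_ciSup (Set.finite_range v).bddAbove i))
    (add_nonneg (Real.iSup_nonneg hv) hδ)

-- `normFormula T b S r` is the paper's `γ`; with `T i`, `b i`, `S k` replaced by `T i**`,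
-- `ι (b i)`, `S k**` it is `γ**`.
noncomputable def normFormula {ι κ α F G : Type*} [SeminormedAddGroup F] [Norm G]
    (T : ι → α → F) (b : ι → F) (S : κ → α → G) (r : κ → ℝ) (x : α) : ℝ :=
  (⨆ i, ‖T i x - b i‖) + ⨆ k, max (r k - ‖S k x‖) 0

lemma normFormula_nonneg {ι κ α F G : Type*} [SeminormedAddGroup F] [Norm G]
    (T : ι → α → F) (b : ι → F) (S : κ → α → G) (r : κ → ℝ) (x : α) :
    0 ≤ normFormula T b S r x :=
  add_nonneg (Real.iSup_nonneg fun _ => norm_nonneg _) (Real.iSup_nonneg fun _ => le_max_right _ _)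

section NormFormula

variable {E F G : Type*} [NormedAddCommGroup E] [NormedSpace ℂ E]
  [NormedAddCommGroup F] [NormedSpace ℂ F] [NormedAddCommGroup G] [NormedSpace ℂ G]
  {ι κ : Type*} (T : ι → E →L[ℂ] F) (b : ι → F) (S : κ → E →L[ℂ] G) (r : κ → ℝ)

lemma normFormula_clmDoubleTranspose_inclusionInDoubleDual (x : E) :
    normFormula (fun i => ⇑(clmDoubleTranspose (T i))) (fun i => inclusionInDoubleDual ℂ F (b i))
      (fun k => ⇑(clmDoubleTranspose (S k))) r (inclusionInDoubleDual ℂ E x) =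
      normFormula (fun i => T i) b (fun k => S k) r x := by
  simp only [normFormula, clmDoubleTranspose_inclusionInDoubleDual,
    norm_inclusionInDoubleDual_sub]
  congr! 5 with k
  exact norm_inclusionInDoubleDual_apply _

lemma exists_normFormula_lt [Fintype ι] [Fintype κ] {X : StrongDual ℂ (StrongDual ℂ E)}
    (hX : ‖X‖ ≤ 1) {ε : ℝ} (hε : 0 < ε) :
    ∃ x : E, ‖x‖ < 1 ∧ normFormula (fun i => T i) b (fun k => S k) r x <
      normFormula (fun i => ⇑(clmDoubleTranspose (T i))) (fun i => inclusionInDoubleDual ℂ F (b i))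
        (fun k => ⇑(clmDoubleTranspose (S k))) r X + ε := by
  set δ := ε / 4 with hδε
  have hδ : 0 < δ := by positivity
  choose φ hφ hφX using fun k =>
    StrongDual.exists_norm_lt_one_lt_re (clmDoubleTranspose (S k) X) (sub_lt_self _ hδ)
  obtain ⟨x, hx, hTx, hφx⟩ := exists_forall_norm_sub_lt_of_clmDoubleTranspose_of_dual T b
    (fun k => (φ k).comp (S k)) hδ hX fun i => lt_add_of_pos_right _ hδ
  have hSx : ∀ k, ‖clmDoubleTranspose (S k) X‖ ≤ ‖S k x‖ + 2 * δ := fun k => by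
    have hre := (abs_le.1 ((Complex.abs_re_le_norm _).trans (hφx k).le)).1
    have hφSx : ((φ k) (S k x)).re ≤ ‖S k x‖ :=
      (Complex.re_le_norm _).trans ((φ k).le_of_opNorm_le (hφ k).le _ |>.trans_eq (one_mul _))
    have hφXk : ‖clmDoubleTranspose (S k) X‖ - δ < (X ((φ k).comp (S k))).re := hφX k
    simp only [Complex.sub_re, ContinuousLinearMap.comp_apply] at hre
    linarith
  have hT := iSup_le_iSup_add_of_forall_le_add (fun i => ContinuousLinearMap.opNorm_nonneg _)
    hδ.le fun i => (hTx i).le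
  have hS := iSup_le_iSup_add_of_forall_le_add (fun k => le_max_right _ 0) (by positivity)
    fun k => show max (r k - ‖S k x‖) 0 ≤ max (r k - ‖clmDoubleTranspose (S k) X‖) 0 + 2 * δ from
      max_le (by linarith [hSx k, le_max_left (r k - ‖clmDoubleTranspose (S k) X‖) 0])
        (add_nonneg (le_max_right _ _) (by positivity))
  refine ⟨x, hx, ?_⟩
  simp only [normFormula]
  linarith

theorem sInf_normFormula_closedBall_eq_zero_iff [Fintype ι] [Fintype κ] :
    sInf (normFormula (fun i => T i) b (fun k => S k) r '' closedBall 0 1) = 0 ↔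
      sInf (normFormula (fun i => ⇑(clmDoubleTranspose (T i)))
        (fun i => inclusionInDoubleDual ℂ F (b i)) (fun k => ⇑(clmDoubleTranspose (S k))) r ''
          closedBall 0 1) = 0 := by
  rw [sInf_image_eq_zero_iff (nonempty_closedBall.2 zero_le_one)
      fun x _ => normFormula_nonneg _ b _ r x,
    sInf_image_eq_zero_iff (nonempty_closedBall.2 zero_le_one)
      fun X _ => normFormula_nonneg _ _ _ r X]
  constructor
  · intro h ε hε
    obtain ⟨x, hx, hxε⟩ := h ε hε
    refine ⟨inclusionInDoubleDual ℂ E x, ?_, ?_⟩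
    · rw [mem_closedBall_zero_iff (E := StrongDual ℂ (StrongDual ℂ E)),
        norm_inclusionInDoubleDual_apply]
      exact mem_closedBall_zero_iff.1 hx
    · rwa [normFormula_clmDoubleTranspose_inclusionInDoubleDual]
  · intro h ε hε
    obtain ⟨X, hX, hXε⟩ := h (ε / 2) (half_pos hε)
    obtain ⟨x, hx, hxX⟩ := exists_normFormula_lt T b S r
      ((mem_closedBall_zero_iff (E := StrongDual ℂ (StrongDual ℂ E))).1 hX)
      (half_pos hε)
    exact ⟨x, mem_closedBall_zero_iff.2 hx.le, by linarith⟩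

end NormFormula

lemma mulLinMap_apply {B : Type*} [CStarAlgebra B] (a c x : B) :
    mulLinMap a c x = a * x + x * c := by
  simp [mulLinMap, ContinuousLinearMap.mul_apply']

theorem stmt_5_general (B : Type*) [CStarAlgebra B]
    (m n : ℕ)
    (a c b : Fin m → B) (a' c' : Fin n → B) (r : Fin n → ℝ) :
    sInf ((fun x : B =>
        (⨆ j : Fin m, ‖a j * x + x * c j - b j‖) +
          ⨆ k : Fin n, max (r k - ‖a' k * x + x * c' k‖) 0) ''
      Metric.closedBall (0 : B) 1) = 0 ↔
    sInf ((fun X : StrongDual ℂ (StrongDual ℂ B) =>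
        (⨆ j : Fin m, ‖clmDoubleTranspose (mulLinMap (a j) (c j)) X -
            inclusionInDoubleDual ℂ B (b j)‖) +
          ⨆ k : Fin n, max (r k - ‖clmDoubleTranspose (mulLinMap (a' k) (c' k)) X‖) 0) ''
      Metric.closedBall (0 : StrongDual ℂ (StrongDual ℂ B)) 1) = 0 := by
  convert sInf_normFormula_closedBall_eq_zero_iff (fun j => mulLinMap (a j) (c j)) b
    (fun k => mulLinMap (a' k) (c' k)) r using 4
  all_goals simp only [normFormula, mulLinMap_apply]

/-- For a unital C*-algebra `B` and a "restricted `B`-linear formula"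
`γ(x) = max_j ‖a_j x + x c_j - b_j‖ + max_k max(r_k - ‖a'_k x + x c'_k‖, 0)`
(with `m ≥ 1`, `n ≥ 0`; the second maximum is `0` when `n = 0`), the infimum of `γ` over the
closed unit ball of `B` is `0` if and only if the infimum over the closed unit ball of `B**`
of the corresponding expression
`γ**(X) = max_j ‖M_{a_j,c_j}**(X) - ι(b_j)‖ + max_k max(r_k - ‖M_{a'_k,c'_k}**(X)‖, 0)`
is `0`. -/
theorem stmt_5 (B : Type*) [CStarAlgebra B]
    (m n : ℕ) (hm : 1 ≤ m)
    (a c b : Fin m → B) (a' c' : Fin n → B) (r : Fin n → ℝ) (hr : ∀ k, 0 ≤ r k) :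
    sInf ((fun x : B =>
        (⨆ j : Fin m, ‖a j * x + x * c j - b j‖) +
          ⨆ k : Fin n, max (r k - ‖a' k * x + x * c' k‖) 0) ''
      Metric.closedBall (0 : B) 1) = 0 ↔
    sInf ((fun X : StrongDual ℂ (StrongDual ℂ B) =>
        (⨆ j : Fin m, ‖clmDoubleTranspose (mulLinMap (a j) (c j)) X -
            inclusionInDoubleDual ℂ B (b j)‖) +
          ⨆ k : Fin n, max (r k - ‖clmDoubleTranspose (mulLinMap (a' k) (c' k)) X‖) 0) ''
      Metric.closedBall (0 : StrongDual ℂ (StrongDual ℂ B)) 1) = 0 :=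
  stmt_5_general B m n a c b a' c' r
end

section
/- Let E and F be complex Banach spaces, let m ≥ 1, and let T_1, …, T_m : E → F be bounded linear maps, with double transposes T_j** : E** → F**. Suppose X ∈ E** satisfies ‖X‖ ≤ 1 and for each j ≤ m there is y_j ∈ F with T_j**(X) = ι_F(y_j), where ι_F : F → F** is the canonical embedding. Then for every ε > 0 there exists x ∈ E with ‖x‖ ≤ 1 and ‖T_j x − y_j‖ < ε for all j ≤ m. -/
/-!
If `y` were not in the norm closure of the image of the unit ball under `x ↦ (T_j x)_j`, a complex
Hahn–Banach functional `ψ` on `F^m` would separate them: `Re ψ < u` on that image, so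
`g = ψ ∘ (T_j)_j ∈ E*` has `‖g‖ ≤ u`. But `T_j** X = ι_F (y_j)` gives `X g = ψ y`, whence
`Re ψ y ≤ ‖X‖ ‖g‖ ≤ u`, contradicting the separation.
-/

open NormedSpace

open RCLike in
theorem StrongDual.norm_le_of_forall_re_apply_le {𝕜 E : Type*} [RCLike 𝕜]
    [SeminormedAddCommGroup E] [NormedSpace 𝕜 E] (g : StrongDual 𝕜 E) {u : ℝ}
    (h : ∀ z, ‖z‖ ≤ 1 → re (g z) ≤ u) : ‖g‖ ≤ u := by
  have hu : 0 ≤ u := by simpa using h 0 (by simp)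
  refine g.opNorm_le_of_unit_norm hu fun z hz => ?_
  obtain ⟨c, hc, hcz⟩ := exists_norm_eq_mul_self (g z)
  calc ‖g z‖ = re (g (c • z)) := by rw [map_smul, smul_eq_mul, ← hcz, ofReal_re]
    _ ≤ u := h _ (by rw [norm_smul, hc, hz, one_mul])

section Bidual

variable {E F ι : Type*} [NormedAddCommGroup E] [NormedSpace ℂ E]
  [NormedAddCommGroup F] [NormedSpace ℂ F] [Fintype ι] [DecidableEq ι]

theorem clmTranspose_apply (T : E →L[ℂ] F) (φ : StrongDual ℂ F) :
    clmTranspose T φ = φ.comp T :=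
  rfl

theorem clmDoubleTranspose_apply (T : E →L[ℂ] F) (X : StrongDual ℂ (StrongDual ℂ E))
    (φ : StrongDual ℂ F) : clmDoubleTranspose T X φ = X (clmTranspose T φ) :=
  rfl

theorem comp_pi_eq_sum_clmTranspose (T : ι → E →L[ℂ] F) (ψ : StrongDual ℂ (ι → F)) :
    ψ.comp (ContinuousLinearMap.pi T) =
      ∑ j, clmTranspose (T j) (ψ.comp (ContinuousLinearMap.single ℂ (fun _ => F) j)) := by
  ext z
  simpa [clmTranspose_apply] using
    (ContinuousLinearMap.sum_comp_single (L := ψ) (v := fun j => T j z)).symm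

theorem apply_comp_pi_of_clmDoubleTranspose_eq (T : ι → E →L[ℂ] F) (y : ι → F)
    (X : StrongDual ℂ (StrongDual ℂ E))
    (hTX : ∀ j, clmDoubleTranspose (T j) X = inclusionInDoubleDual ℂ F (y j))
    (ψ : StrongDual ℂ (ι → F)) :
    X (ψ.comp (ContinuousLinearMap.pi T)) = ψ y := by
  rw [comp_pi_eq_sum_clmTranspose, map_sum,
    ← ContinuousLinearMap.sum_comp_single (L := ψ) (v := y)]
  refine Finset.sum_congr rfl fun j _ => ?_
  rw [← clmDoubleTranspose_apply, hTX j, dual_def]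

theorem mem_closure_image_closedBall_of_clmDoubleTranspose_eq (T : ι → E →L[ℂ] F) (y : ι → F)
    (X : StrongDual ℂ (StrongDual ℂ E)) (hX : ‖X‖ ≤ 1)
    (hTX : ∀ j, clmDoubleTranspose (T j) X = inclusionInDoubleDual ℂ F (y j)) :
    y ∈ closure (ContinuousLinearMap.pi T '' Metric.closedBall 0 1) := by
  by_contra hy
  have hconv : Convex ℝ (closure (ContinuousLinearMap.pi T '' Metric.closedBall (0 : E) 1)) :=
    ((convex_closedBall (0 : E) 1).linear_image
      ((ContinuousLinearMap.pi T).toLinearMap.restrictScalars ℝ)).closure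
  obtain ⟨ψ, u, hψ, hψy⟩ :=
    RCLike.geometric_hahn_banach_closed_point (𝕜 := ℂ) hconv isClosed_closure hy
  set g := ψ.comp (ContinuousLinearMap.pi T)
  have hg : ‖g‖ ≤ u := StrongDual.norm_le_of_forall_re_apply_le g fun z hz =>
    (hψ _ (subset_closure ⟨z, mem_closedBall_zero_iff.mpr hz, rfl⟩)).le
  have hψy_le : (ψ y).re ≤ u := calc
    (ψ y).re = (X g).re := by rw [apply_comp_pi_of_clmDoubleTranspose_eq T y X hTX]
    _ ≤ ‖X g‖ := Complex.re_le_norm _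
    _ ≤ ‖X‖ * ‖g‖ := X.le_opNorm g
    _ ≤ 1 * u := mul_le_mul hX hg (norm_nonneg g) zero_le_one
    _ = u := one_mul u
  exact (hψy.trans_le hψy_le).false

end Bidual

theorem stmt_6_general (E F : Type*)
    [NormedAddCommGroup E] [NormedSpace ℂ E]
    [NormedAddCommGroup F] [NormedSpace ℂ F]
    (m : ℕ) (T : Fin m → (E →L[ℂ] F)) (y : Fin m → F)
    (X : StrongDual ℂ (StrongDual ℂ E)) (hX : ‖X‖ ≤ 1)
    (hTX : ∀ j, clmDoubleTranspose (T j) X = inclusionInDoubleDual ℂ F (y j)) :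
    ∀ ε : ℝ, 0 < ε → ∃ x : E, ‖x‖ ≤ 1 ∧ ∀ j, ‖T j x - y j‖ < ε := by
  intro ε hε
  obtain ⟨_, ⟨x, hx, rfl⟩, hdist⟩ := Metric.mem_closure_iff.mp
    (mem_closure_image_closedBall_of_clmDoubleTranspose_eq T y X hX hTX) ε hε
  refine ⟨x, mem_closedBall_zero_iff.mp hx, fun j => ?_⟩
  rw [dist_comm, dist_eq_norm] at hdist
  exact (norm_le_pi_norm _ j).trans_lt hdist

/-- If `T₁, …, T_m : E → F` are bounded linear maps between complex Banach
spaces and `X ∈ E**` has norm at most `1` and satisfies `T_j**(X) = ι_F(y_j)` with `y_j ∈ F`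
for all `j ≤ m`, then for every `ε > 0` there is `x` in the unit ball of `E` with
`‖T_j x - y_j‖ < ε` for all `j ≤ m`. -/
theorem stmt_6 (E F : Type*)
    [NormedAddCommGroup E] [NormedSpace ℂ E] [CompleteSpace E]
    [NormedAddCommGroup F] [NormedSpace ℂ F] [CompleteSpace F]
    (m : ℕ) (hm : 1 ≤ m) (T : Fin m → (E →L[ℂ] F)) (y : Fin m → F)
    (X : StrongDual ℂ (StrongDual ℂ E)) (hX : ‖X‖ ≤ 1)
    (hTX : ∀ j, clmDoubleTranspose (T j) X = inclusionInDoubleDual ℂ F (y j)) :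
    ∀ ε : ℝ, 0 < ε → ∃ x : E, ‖x‖ ≤ 1 ∧ ∀ j, ‖T j x - y j‖ < ε :=
  stmt_6_general E F m T y X hX hTX
end
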